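/- The parameters of the binary observation model are identifiable: if two parameter pairs (A, c) and (Â, ĉ) induce the same transition matrix on {0,1}^n, then A = Â and c = ĉ. -/
import Mathlib


noncomputable def Phi (x : ℝ) : ℝ :=
  ∫ t in Set.Iic x, (Real.sqrt (2 * Real.pi))⁻¹ * Real.exp (-t ^ 2 / 2)

noncomputable def transMat {n : ℕ} (A : Matrix (Fin n) (Fin n) ℝ) (c : Fin n → ℝ)
    (u s : Fin n → Bool) : ℝ :=
  ∏ i, (if s i then 1 - Phi (c i - ∑ j, A i j * (if u j then (1 : ℝ) else 0))
        else Phi (c i - ∑ j, A i j * (if u j then (1 : ℝ) else 0)))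

open MeasureTheory ProbabilityTheory Set

lemma Phi_eq (x : ℝ) : Phi x = ∫ t in Set.Iic x, gaussianPDFReal 0 1 t := by
  unfold Phi
  refine setIntegral_congr_fun measurableSet_Iic fun t _ => ?_
  simp [gaussianPDFReal]

lemma setIntegral_gauss_pos {s : Set ℝ} (hs : MeasurableSet s) (hs' : 0 < volume s) :
    0 < ∫ t in s, gaussianPDFReal 0 1 t := by
  rw [setIntegral_pos_iff_support_of_nonneg_ae
    (ae_of_all _ fun t => gaussianPDFReal_nonneg 0 1 t)
    ((integrable_gaussianPDFReal 0 1).integrableOn)]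
  have : Function.support (gaussianPDFReal 0 1) = Set.univ := by
    ext t; simp [Function.mem_support, (gaussianPDFReal_pos 0 1 t one_ne_zero).ne']
  rw [this, Set.univ_inter]; exact hs'

lemma Phi_pos (x : ℝ) : 0 < Phi x := by
  rw [Phi_eq]
  exact setIntegral_gauss_pos measurableSet_Iic (by simp)

lemma Phi_lt_one (x : ℝ) : Phi x < 1 := by
  rw [Phi_eq]
  have h := intervalIntegral.integral_Iic_add_Ioi (b := x) (μ := volume)
    ((integrable_gaussianPDFReal 0 1).integrableOn)
    ((integrable_gaussianPDFReal 0 1).integrableOn)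
  rw [integral_gaussianPDFReal_eq_one 0 one_ne_zero] at h
  have h2 := setIntegral_gauss_pos measurableSet_Ioi (by simp : 0 < volume (Set.Ioi x))
  linarith

lemma Phi_strictMono : StrictMono Phi := by
  intro a b hab
  rw [Phi_eq, Phi_eq, ← Set.Iic_union_Ioc_eq_Iic hab.le,
    setIntegral_union (Set.Iic_disjoint_Ioc le_rfl) measurableSet_Ioc
      ((integrable_gaussianPDFReal 0 1).integrableOn)
      ((integrable_gaussianPDFReal 0 1).integrableOn)]
  have := setIntegral_gauss_pos measurableSet_Ioc
    (by simp [hab] : 0 < volume (Set.Ioc a b))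
  linarith

theorem stmt7 {n : ℕ} (hn : 2 ≤ n)
    (A Ahat : Matrix (Fin n) (Fin n) ℝ) (c chat : Fin n → ℝ)
    (h : ∀ u s : Fin n → Bool, transMat A c u s = transMat Ahat chat u s) :
    A = Ahat ∧ c = chat := by
  have key : ∀ (u : Fin n → Bool) (i : Fin n),
      c i - ∑ j, A i j * (if u j then (1:ℝ) else 0)
        = chat i - ∑ j, Ahat i j * (if u j then (1:ℝ) else 0) := by
    intro u i
    set p : Fin n → ℝ := fun j => Phi (c j - ∑ k, A j k * (if u k then (1:ℝ) else 0)) with hp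
    set q : Fin n → ℝ := fun j => Phi (chat j - ∑ k, Ahat j k * (if u k then (1:ℝ) else 0)) with hq
    have e0 : ∏ j, p j = ∏ j, q j := by
      have := h u (fun _ => false)
      simpa [transMat, hp, hq] using this
    have e1 : ∏ j, (if j = i then 1 - p j else p j)
        = ∏ j, (if j = i then 1 - q j else q j) := by
      have := h u (fun j => decide (j = i))
      simpa [transMat, hp, hq] using this
    have hmem : i ∈ Finset.univ (α := Fin n) := Finset.mem_univ i
    have split : ∀ f : Fin n → ℝ, ∏ j, f j = f i * ∏ j ∈ Finset.univ.erase i, f j :=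
      fun f => (Finset.mul_prod_erase Finset.univ f hmem).symm
    have erg : ∀ f g : Fin n → ℝ, (∀ j, j ≠ i → f j = g j) →
        ∏ j ∈ Finset.univ.erase i, f j = ∏ j ∈ Finset.univ.erase i, g j := by
      intro f g hfg
      exact Finset.prod_congr rfl fun j hj => hfg j (Finset.ne_of_mem_erase hj)
    set R := ∏ j ∈ Finset.univ.erase i, p j with hR
    set S := ∏ j ∈ Finset.univ.erase i, q j with hS
    have e0' : p i * R = q i * S := by
      rw [split p, split q] at e0; exact e0
    have e1' : (1 - p i) * R = (1 - q i) * S := by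
      rw [split (fun j => if j = i then 1 - p j else p j),
          split (fun j => if j = i then 1 - q j else q j)] at e1
      simpa [erg (fun j => if j = i then 1 - p j else p j) p (fun j hj => if_neg hj),
        erg (fun j => if j = i then 1 - q j else q j) q (fun j hj => if_neg hj)] using e1
    have hRS : R = S := by nlinarith [e0', e1']
    have hRpos : 0 < R := Finset.prod_pos fun j _ => Phi_pos _
    have hpq : p i = q i := by
      rw [hRS] at e0'
      have : 0 < S := hRS ▸ hRpos
      exact mul_right_cancel₀ this.ne' e0'
    exact Phi_strictMono.injective hpq
  have hc : c = chat := by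
    funext i
    have := key (fun _ => false) i
    simpa using this
  refine ⟨?_, hc⟩
  ext i j
  have := key (fun k => decide (k = j)) i
  simp only [decide_eq_true_eq] at this
  have hsum : ∀ B : Matrix (Fin n) (Fin n) ℝ,
      (∑ k, B i k * (if k = j then (1:ℝ) else 0)) = B i j := by
    intro B
    rw [Finset.sum_eq_single j] <;> simp +contextual
  rw [hsum A, hsum Ahat, hc] at this
  linarith
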